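/- Let P be a tree-shaped polyomino with N tiles and let P* ⊆ P be any constructible polyomino contained in P. Then there exists a path W ⊆ P (a path-shaped polyomino contained in P) that is constructible and satisfies |W| · √N ≥ |P*|. In other words, the longest constructible path in a tree-shaped polyomino is a √N-approximation for the maximum-cardinality constructible subpolyomino. -/

import Mathlib

/-- Grid points. -/
abbrev Pt := ℤ × ℤ

/-- Two grid points are adjacent if they are at L1-distance 1. -/
def GridAdj (p q : Pt) : Prop := |p.1 - q.1| + |p.2 - q.2| = 1

/-- A set of grid points is connected in the grid graph. -/
def ConnectedIn (Q : Set Pt) : Prop :=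
  ∀ p ∈ Q, ∀ q ∈ Q, Relation.ReflTransGen (fun a b => b ∈ Q ∧ GridAdj a b) p q

/-- A polyomino: a finite nonempty set of grid points whose grid graph is connected. -/
def IsPolyomino (P : Finset Pt) : Prop := P.Nonempty ∧ ConnectedIn ↑P

/-- Northern blocking set of `p` with respect to `Q`. -/
def Nblk (p : Pt) (Q : Set Pt) : Set Pt := {q ∈ Q | p.2 < q.2 ∧ |q.1 - p.1| ≤ 1}
/-- Southern blocking set. -/
def Sblk (p : Pt) (Q : Set Pt) : Set Pt := {q ∈ Q | q.2 < p.2 ∧ |q.1 - p.1| ≤ 1}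
/-- Eastern blocking set. -/
def Eblk (p : Pt) (Q : Set Pt) : Set Pt := {q ∈ Q | p.1 < q.1 ∧ |q.2 - p.2| ≤ 1}
/-- Western blocking set. -/
def Wblk (p : Pt) (Q : Set Pt) : Set Pt := {q ∈ Q | q.1 < p.1 ∧ |q.2 - p.2| ≤ 1}

/-- At least one of the four blocking sets of `p` w.r.t. `Q` is empty. -/
def FreeDir (p : Pt) (Q : Set Pt) : Prop :=
  Nblk p Q = ∅ ∨ Sblk p Q = ∅ ∨ Eblk p Q = ∅ ∨ Wblk p Q = ∅

/-- A position `p ∉ Q` can be added to `Q`. -/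
def CanAdd (p : Pt) (Q : Set Pt) : Prop :=
  p ∉ Q ∧ (∃ q ∈ Q, GridAdj p q) ∧ FreeDir p Q

/-- A list of tiles is a valid construction order. -/
def ConstructibleOrder (l : List Pt) : Prop :=
  ∀ (i : ℕ) (h : i < l.length), 1 ≤ i → CanAdd (l.get ⟨i, h⟩) {x | x ∈ l.take i}

/-- A finite set of tiles is constructible. -/
def Constructible (P : Finset Pt) : Prop :=
  ∃ l : List Pt, l.Nodup ∧ l.toFinset = P ∧ ConstructibleOrder l

/-- A tile `t ∈ Q` is removable from `Q`. -/
def Removable (t : Pt) (Q : Set Pt) : Prop :=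
  t ∈ Q ∧ (Q \ {t} = ∅ ∨ ConnectedIn (Q \ {t})) ∧ FreeDir t (Q \ {t})

/-- A list of tiles is a valid decomposition order. -/
def DecompOrder (l : List Pt) : Prop :=
  ∀ (i : ℕ) (h : i < l.length), Removable (l.get ⟨i, h⟩) {x | x ∈ l.drop i}

/-- A finite set of tiles is decomposable. -/
def Decomposable (P : Finset Pt) : Prop :=
  ∃ l : List Pt, l.Nodup ∧ l.toFinset = P ∧ DecompOrder l

/-- A polyomino is simple (hole-free) if the complement grid graph is connected. -/
def SimplePoly (P : Finset Pt) : Prop := ConnectedIn {p : Pt | p ∉ P}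

/-- The 2×2 square of grid points with lower-left corner `a`. -/
def Square (a : Pt) : Set Pt := {a, (a.1 + 1, a.2), (a.1, a.2 + 1), (a.1 + 1, a.2 + 1)}

/-- A tile `t ∈ P` is convex if some 2×2 square contains `t` and no other point of `P`. -/
def ConvexTile (t : Pt) (P : Finset Pt) : Prop :=
  t ∈ P ∧ ∃ a : Pt, t ∈ Square a ∧ ∀ q ∈ P, q ∈ Square a → q = t

/-- A tile `t ∈ P` is a cut tile if `P \ {t}` is nonempty and disconnected. -/
def CutTile (t : Pt) (P : Finset Pt) : Prop :=
  t ∈ P ∧ (↑P \ {t} : Set Pt).Nonempty ∧ ¬ ConnectedIn (↑P \ {t})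

/-- The grid graph induced on a set of grid points. -/
def gridGraph (Q : Set Pt) : SimpleGraph Q where
  Adj a b := GridAdj a.val b.val
  symm := by
    constructor
    intro a b h
    unfold GridAdj at h ⊢
    rw [abs_sub_comm, abs_sub_comm (b.val.2)]
    exact h
  loopless := by
    constructor
    intro a h
    simp [GridAdj] at h

/-- A polyomino is tree-shaped if its grid graph is a tree. -/
def TreeShaped (P : Finset Pt) : Prop := (gridGraph (↑P : Set Pt)).IsTree

/-- A list of grid points is an ordering of a path-shaped polyomino:
consecutive entries are adjacent, and no other pairs are adjacent. -/
def IsPathOrdering (l : List Pt) : Prop :=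
  l.Nodup ∧ l.Chain' GridAdj ∧
    ∀ (i j : ℕ) (hi : i < l.length) (hj : j < l.length), i + 1 < j →
      ¬ GridAdj (l.get ⟨i, hi⟩) (l.get ⟨j, hj⟩)

/-- A finite set of tiles is a path-shaped polyomino. -/
def IsPathPoly (W : Finset Pt) : Prop := ∃ l : List Pt, l.toFinset = W ∧ IsPathOrdering l

/-- The grid points on the straight segment from `p` to `q` (inclusive),
for `p`, `q` on a common axis-parallel line. -/
def segList (p q : Pt) : List Pt :=
  (List.range ((|q.1 - p.1| + |q.2 - p.2|).toNat + 1)).map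
    (fun k => (p.1 + (k : ℤ) * (q.1 - p.1).sign, p.2 + (k : ℤ) * (q.2 - p.2).sign))

/-- `l` is a simple path in the grid graph of `Q` from `a` to `b`. -/
def IsPathIn (Q : Set Pt) (a b : Pt) (l : List Pt) : Prop :=
  l ≠ [] ∧ l.Nodup ∧ (∀ x ∈ l, x ∈ Q) ∧ l.Chain' GridAdj ∧
    l.head? = some a ∧ l.getLast? = some b

/-- `l` is a shortest path in the grid graph of `Q` from `a` to `b`. -/
def IsShortestPathIn (Q : Set Pt) (a b : Pt) (l : List Pt) : Prop :=
  IsPathIn Q a b l ∧ ∀ l' : List Pt, IsPathIn Q a b l' → l.length ≤ l'.length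

section TapAux

variable {P : Finset Pt}

lemma gridAdj_symm {p q : Pt} (h : GridAdj p q) : GridAdj q p := by
  unfold GridAdj at *
  rw [abs_sub_comm, abs_sub_comm q.2]
  exact h

lemma freeDir_mono {p : Pt} {S Q : Set Pt} (hSQ : S ⊆ Q) (h : FreeDir p Q) : FreeDir p S := by
  unfold FreeDir Nblk Sblk Eblk Wblk at *
  rcases h with h | h | h | h
  · exact Or.inl (Set.eq_empty_of_subset_empty (h ▸ fun x hx => ⟨hSQ hx.1, hx.2⟩))
  · exact Or.inr (Or.inl (Set.eq_empty_of_subset_empty (h ▸ fun x hx => ⟨hSQ hx.1, hx.2⟩)))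
  · exact Or.inr (Or.inr (Or.inl (Set.eq_empty_of_subset_empty (h ▸ fun x hx => ⟨hSQ hx.1, hx.2⟩))))
  · exact Or.inr (Or.inr (Or.inr (Set.eq_empty_of_subset_empty (h ▸ fun x hx => ⟨hSQ hx.1, hx.2⟩))))

/-- From `ConnectedIn Q` produce a walk in the grid graph of `P ⊇ Q` whose support stays in `Q`. -/
lemma exists_walk_of_connectedIn {Q : Set Pt} (hQP : Q ⊆ (↑P : Set Pt)) (hconn : ConnectedIn Q)
    {a b : Pt} (ha : a ∈ Q) (hb : b ∈ Q) :
    ∃ w : (gridGraph (↑P : Set Pt)).Walk ⟨a, hQP ha⟩ ⟨b, hQP hb⟩,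
      ∀ x ∈ w.support, (x : Pt) ∈ Q := by
  have h := hconn a ha b hb
  induction h with
  | refl => exact ⟨SimpleGraph.Walk.nil, by simp [ha]⟩
  | @tail c d hac hcd ih =>
      obtain ⟨hdQ, hadj⟩ := hcd
      have hcQ : c ∈ Q := by
        rcases (Relation.reflTransGen_iff_eq_or_transGen.mp hac) with h | h
        · exact h ▸ ha
        · obtain ⟨e, _, he⟩ := Relation.TransGen.tail'_iff.mp h
          exact he.1
      obtain ⟨w, hw⟩ := ih hcQ
      refine ⟨w.concat (by exact hadj : (gridGraph (↑P : Set Pt)).Adj ⟨c, hQP hcQ⟩ ⟨d, hQP hdQ⟩), ?_⟩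
      intro x hx
      replace hx := List.mem_append.mp (Eq.mp (congrArg (x ∈ ·) (SimpleGraph.Walk.support_concat w _)) hx)
      rcases hx with h | h
      · exact hw x h
      · simp at h; subst h; exact hdQ


/-- The support of a grid-graph walk, as points, is a `GridAdj`-chain. -/
lemma walk_support_chain' {u v : ↑(↑P : Set Pt)} (w : (gridGraph (↑P : Set Pt)).Walk u v) :
    (w.support.map Subtype.val).Chain' GridAdj := by
  induction w with
  | nil => exact List.isChain_singleton _
  | @cons a b c hab w ih =>
      rw [SimpleGraph.Walk.support_cons, List.map_cons]
      rw [show List.Chain' GridAdj _ = List.IsChain GridAdj _ from rfl, List.isChain_cons]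
      refine ⟨?_, ih⟩
      intro y hy
      have : w.support ≠ [] := w.support_ne_nil
      rw [SimpleGraph.Walk.support_eq_cons, List.map_cons, List.head?_cons] at hy
      simp only [Option.mem_def, Option.some.injEq] at hy
      subst hy
      exact hab

lemma walk_support_head {u v : ↑(↑P : Set Pt)} (w : (gridGraph (↑P : Set Pt)).Walk u v) :
    (w.support.map Subtype.val).head? = some (u : Pt) := by
  rw [SimpleGraph.Walk.support_eq_cons, List.map_cons, List.head?_cons]

lemma walk_support_last {u v : ↑(↑P : Set Pt)} (w : (gridGraph (↑P : Set Pt)).Walk u v) :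
    (w.support.map Subtype.val).getLast? = some (v : Pt) := by
  induction w with
  | nil => simp
  | @cons a b c hab w ih =>
      rw [SimpleGraph.Walk.support_cons, List.map_cons]
      rw [List.getLast?_cons]
      rcases hh : (w.support.map Subtype.val).getLast? with _ | y
      · rw [List.getLast?_eq_none_iff, List.map_eq_nil_iff] at hh
        exact absurd hh w.support_ne_nil
      · rw [hh] at ih; simp at ih
        simp [hh, ih]

/-- Lift a list that is a `GridAdj`-chain inside `P` to a walk in the grid graph. -/
lemma exists_walk_of_list (L : List Pt) (hch : L.Chain' GridAdj)
    (hmem : ∀ x ∈ L, x ∈ (↑P : Set Pt)) :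
    ∀ (a b : Pt) (_ : L.head? = some a) (_ : L.getLast? = some b)
      (ha : a ∈ (↑P : Set Pt)) (hb : b ∈ (↑P : Set Pt)),
      ∃ w : (gridGraph (↑P : Set Pt)).Walk ⟨a, ha⟩ ⟨b, hb⟩,
        w.support.map Subtype.val = L := by
  induction L with
  | nil => intro a b h; simp at h
  | cons x L ih =>
      intro a b hhead hlast ha hb
      simp only [List.head?_cons, Option.some.injEq] at hhead
      subst hhead
      cases L with
      | nil =>
          simp only [List.getLast?_singleton, Option.some.injEq] at hlast
          subst hlast
          exact ⟨SimpleGraph.Walk.nil, by simp⟩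
      | cons y L' =>
          have hch' : (y :: L').Chain' GridAdj := (List.isChain_cons.mp hch).2
          have hadjxy : GridAdj x y := (List.isChain_cons_cons.mp hch).1
          have hy : y ∈ (↑P : Set Pt) := hmem y (by simp)
          have hlast' : (y :: L').getLast? = some b := by
            rwa [List.getLast?_cons_cons] at hlast
          obtain ⟨w, hw⟩ := ih hch' (fun z hz => hmem z (List.mem_cons_of_mem _ hz))
            y b rfl hlast' hy hb
          refine ⟨SimpleGraph.Walk.cons (by exact hadjxy) w, ?_⟩
          show x :: List.map Subtype.val w.support = x :: y :: L'; rw [hw]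


/-- In a tree-shaped polyomino there are no chords on chains: non-consecutive
entries of a nodup `GridAdj`-chain are non-adjacent. -/
lemma no_chords_of_tree (htree : TreeShaped P) (L : List Pt) (hnd : L.Nodup)
    (hch : L.Chain' GridAdj) (hmem : ∀ x ∈ L, x ∈ (↑P : Set Pt)) :
    ∀ (i j : ℕ) (hi : i < L.length) (hj : j < L.length), i + 1 < j →
      ¬ GridAdj (L.get ⟨i, hi⟩) (L.get ⟨j, hj⟩) := by
  intro i j hi hj hij hadj
  set u : Pt := L.get ⟨i, hi⟩ with hu
  set v : Pt := L.get ⟨j, hj⟩ with hv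
  have hiu : u ∈ L := List.get_mem _ _
  have hjv : v ∈ L := List.get_mem _ _
  have huP : u ∈ (↑P : Set Pt) := hmem u hiu
  have hvP : v ∈ (↑P : Set Pt) := hmem v hjv
  set seg : List Pt := (L.drop i).take (j - i + 1) with hseg
  have hsub : seg.Sublist L := (List.take_sublist _ _).trans (List.drop_sublist _ _)
  have hlen : seg.length = j - i + 1 := by
    rw [hseg, List.length_take, List.length_drop]
    omega
  have hhead : seg.head? = some u := by
    rw [hseg, List.head?_take, if_neg (by omega), List.head?_drop,
      List.getElem?_eq_getElem hi]
    simp [hu]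
  have hlast : seg.getLast? = some v := by
    rw [hseg, List.getLast?_take, if_neg (by omega)]
    have : (L.drop i)[j - i + 1 - 1]? = some v := by
      rw [List.getElem?_drop]
      have : i + (j - i + 1 - 1) = j := by omega
      rw [this, List.getElem?_eq_getElem hj]
      simp [hv]
    rw [this, Option.some_or]
  obtain ⟨w2, hw2⟩ := exists_walk_of_list (P := P) seg ((hch.drop i).take _)
    (fun x hx => hmem x (hsub.mem hx)) u v hhead hlast huP hvP
  have hw2path : w2.IsPath := by
    rw [SimpleGraph.Walk.isPath_def]
    exact (List.Nodup.of_map Subtype.val (hw2 ▸ hnd.sublist hsub))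
  have hadj' : (gridGraph (↑P : Set Pt)).Adj ⟨u, huP⟩ ⟨v, hvP⟩ := hadj
  have hne := (SimpleGraph.isAcyclic_iff_path_unique.mp htree.2) ⟨w2, hw2path⟩
    (SimpleGraph.Path.singleton hadj')
  have hlen2 : w2.support.length = j - i + 1 := by
    have h1 := congrArg List.length hw2
    rw [List.length_map] at h1
    rw [h1, hlen]
  have : w2.support.length = 2 := by
    have := congrArg (fun p => p.1.support.length) hne
    simpa [SimpleGraph.Path.singleton] using this
  omega


lemma exists_nodup_chain {Q : Set Pt} (hQP : Q ⊆ (↑P : Set Pt)) (hconn : ConnectedIn Q)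
    {a b : Pt} (ha : a ∈ Q) (hb : b ∈ Q) :
    ∃ L : List Pt, L.Nodup ∧ L.Chain' GridAdj ∧ (∀ x ∈ L, x ∈ Q) ∧
      L.head? = some a ∧ L.getLast? = some b := by
  obtain ⟨w, hw⟩ := exists_walk_of_connectedIn hQP hconn ha hb
  set p := w.toPath with hp
  refine ⟨p.1.support.map Subtype.val, ?_, walk_support_chain' _, ?_, walk_support_head _,
    walk_support_last _⟩
  · exact p.2.support_nodup.map Subtype.val_injective
  · intro x hx
    obtain ⟨y, hy, rfl⟩ := List.mem_map.mp hx
    exact hw y (SimpleGraph.Walk.support_toPath_subset w hy)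

/-- Along a `GridAdj`-chain, each coordinate moves by at most one per step. -/
lemma chain'_coord_bound :
    ∀ (L : List Pt) (_ : L.Chain' GridAdj) (a b : Pt)
      (_ : L.head? = some a) (_ : L.getLast? = some b),
      |b.1 - a.1| ≤ (L.length : ℤ) - 1 ∧ |b.2 - a.2| ≤ (L.length : ℤ) - 1 := by
  intro L
  induction L with
  | nil => intro _ a b h; simp at h
  | cons x L ih =>
      intro hch a b hhead hlast
      simp only [List.head?_cons, Option.some.injEq] at hhead
      subst hhead
      cases L with
      | nil =>
          simp only [List.getLast?_singleton, Option.some.injEq] at hlast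
          subst hlast
          simp
      | cons y L' =>
          have hch' : (y :: L').Chain' GridAdj := (List.isChain_cons_cons.mp hch).2
          have hadj : GridAdj x y := (List.isChain_cons_cons.mp hch).1
          have hlast' : (y :: L').getLast? = some b := by
            rwa [List.getLast?_cons_cons] at hlast
          obtain ⟨h1, h2⟩ := ih hch' y b rfl hlast'
          have hxy : |y.1 - x.1| + |y.2 - x.2| = 1 := by
            have h := hadj
            unfold GridAdj at h
            calc |y.1 - x.1| + |y.2 - x.2| = |x.1 - y.1| + |x.2 - y.2| := by
                  rw [abs_sub_comm, abs_sub_comm y.2]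
              _ = 1 := h
          have hnn1 := abs_nonneg (y.1 - x.1)
          have hnn2 := abs_nonneg (y.2 - x.2)
          constructor
          · have htri : |b.1 - x.1| ≤ |b.1 - y.1| + |y.1 - x.1| := by
              have := abs_add_le (b.1 - y.1) (y.1 - x.1)
              simpa using this
            simp only [List.length_cons] at h1 ⊢
            push_cast at h1 ⊢
            omega
          · have htri : |b.2 - x.2| ≤ |b.2 - y.2| + |y.2 - x.2| := by
              have := abs_add_le (b.2 - y.2) (y.2 - x.2)
              simpa using this
            simp only [List.length_cons] at h2 ⊢
            push_cast at h2 ⊢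
            omega


/-- Every nonempty prefix of a construction order is connected. -/
lemma prefix_connected (l : List Pt) (hord : ConstructibleOrder l) :
    ∀ j, 1 ≤ j → j ≤ l.length → ConnectedIn {x | x ∈ l.take j} := by
  intro j
  induction j with
  | zero => intro h; omega
  | succ j ih =>
      intro _ hle
      rcases Nat.eq_zero_or_pos j with rfl | hj1
      · -- take 1
        have hne : l ≠ [] := by intro h; subst h; simp at hle
        intro p hp q hq
        simp only [Set.mem_setOf_eq, zero_add, List.take_one] at hp hq
        rcases hh : l.head? with _ | z
        · rw [List.head?_eq_none_iff] at hh; exact absurd hh hne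
        · rw [hh] at hp hq
          simp at hp hq
          subst hp; subst hq
          exact Relation.ReflTransGen.refl
      · have hj : j < l.length := by omega
        have ihc := ih hj1 (by omega)
        set t := l.get ⟨j, hj⟩ with ht
        have htake : l.take (j+1) = l.take j ++ [t] := by
          rw [List.take_succ, List.getElem?_eq_getElem hj]
          simp [ht]
        have hmem : ∀ x : Pt, x ∈ l.take (j+1) ↔ x ∈ l.take j ∨ x = t := by
          intro x
          rw [htake, List.mem_append, List.mem_singleton]
        obtain ⟨-, ⟨q₀, hq₀, hadj⟩, -⟩ := hord j hj hj1
        have hmono : ∀ a b : Pt, (b ∈ {x | x ∈ l.take j} ∧ GridAdj a b) →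
            (b ∈ {x | x ∈ l.take (j+1)} ∧ GridAdj a b) := by
          intro a b ⟨hb, h⟩
          exact ⟨(hmem b).mpr (Or.inl hb), h⟩
        intro p hp q hq
        simp only [Set.mem_setOf_eq] at hp hq
        rcases (hmem p).mp hp with hpQ | rfl <;> rcases (hmem q).mp hq with hqQ | rfl
        · exact Relation.ReflTransGen.mono hmono _ _ (ihc p hpQ q hqQ)
        · refine (Relation.ReflTransGen.mono hmono _ _ (ihc p hpQ q₀ hq₀)).tail ?_
          exact ⟨(hmem t).mpr (Or.inr rfl), gridAdj_symm hadj⟩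
        · refine Relation.ReflTransGen.head ?_ (Relation.ReflTransGen.mono hmono _ _ (ihc q₀ hq₀ q hqQ))
          exact ⟨(hmem q₀).mpr (Or.inl hq₀), hadj⟩
        · exact Relation.ReflTransGen.refl

/-- Contiguous segment of a chain between two indices. -/
lemma seg_of_indices (L : List Pt) (hch : L.Chain' GridAdj) (hnd : L.Nodup)
    (i j : ℕ) (hi : i < L.length) (hj : j < L.length) (hij : i ≤ j) :
    ∃ M : List Pt, M.Sublist L ∧ M.Chain' GridAdj ∧ M.Nodup ∧
      M.head? = some (L.get ⟨i, hi⟩) ∧ M.getLast? = some (L.get ⟨j, hj⟩) := by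
  set M : List Pt := (L.drop i).take (j - i + 1) with hM
  have hsub : M.Sublist L := (List.take_sublist _ _).trans (List.drop_sublist _ _)
  refine ⟨M, hsub, (hch.drop i).take _, hnd.sublist hsub, ?_, ?_⟩
  · rw [hM, List.head?_take, if_neg (by omega), List.head?_drop,
      List.getElem?_eq_getElem hi]
    simp
  · rw [hM, List.getLast?_take, if_neg (by omega)]
    have : (L.drop i)[j - i + 1 - 1]? = some (L.get ⟨j, hj⟩) := by
      rw [List.getElem?_drop]
      have hji : i + (j - i + 1 - 1) = j := by omega
      rw [hji, List.getElem?_eq_getElem hj]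
      simp
    rw [this, Option.some_or]

/-- A chain between any two of its members, within a nodup chain. -/
lemma exists_sub_chain (lp : List Pt) (hch : lp.Chain' GridAdj) (hnd : lp.Nodup)
    {t c : Pt} (htm : t ∈ lp) (hcm : c ∈ lp) :
    ∃ M : List Pt, (∀ x ∈ M, x ∈ lp) ∧ M.Chain' GridAdj ∧ M.Nodup ∧
      M.head? = some t ∧ M.getLast? = some c := by
  obtain ⟨⟨it, hit⟩, rfl⟩ := List.mem_iff_get.mp htm
  obtain ⟨⟨ic, hic⟩, rfl⟩ := List.mem_iff_get.mp hcm
  rcases le_total it ic with h | h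
  · obtain ⟨M, hsub, h1, h2, h3, h4⟩ := seg_of_indices lp hch hnd it ic hit hic h
    exact ⟨M, fun x hx => hsub.mem hx, h1, h2, h3, h4⟩
  · obtain ⟨M, hsub, h1, h2, h3, h4⟩ := seg_of_indices lp hch hnd ic it hic hit h
    refine ⟨M.reverse, fun x hx => hsub.mem (List.mem_reverse.mp hx), ?_,
      List.nodup_reverse.mpr h2, ?_, ?_⟩
    · rw [show List.Chain' GridAdj M.reverse = List.IsChain GridAdj M.reverse from rfl, List.isChain_reverse]
      exact h1.imp (fun a b hab => gridAdj_symm hab)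
    · rw [List.head?_reverse]
      exact h4
    · rw [List.getLast?_reverse]
      exact h3


/-- Key lemma: in a tree-shaped polyomino, any simple chain whose tiles lie in a
constructible subset is itself constructible (order the tiles by insertion time). -/
lemma chain_constructible (htree : TreeShaped P)
    (l : List Pt) (hnd : l.Nodup) (hord : ConstructibleOrder l)
    (hlP : ∀ x ∈ l, x ∈ (↑P : Set Pt))
    (lp : List Pt) (hpnd : lp.Nodup) (hpch : lp.Chain' GridAdj)
    (hpl : ∀ x ∈ lp, x ∈ l) :
    ∃ lw : List Pt, lw.Nodup ∧ lw.toFinset = lp.toFinset ∧ ConstructibleOrder lw := by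
  classical
  set lw := l.filter (fun x => decide (x ∈ lp)) with hlw
  have hndw : lw.Nodup := hnd.filter _
  have hmemw : ∀ x : Pt, x ∈ lw ↔ x ∈ l ∧ x ∈ lp := by
    intro x; rw [hlw, List.mem_filter]; simp
  refine ⟨lw, hndw, ?_, ?_⟩
  · ext x
    simp only [List.mem_toFinset]
    rw [hmemw x]
    exact ⟨fun h => h.2, fun h => ⟨hpl x h, h⟩⟩
  intro i hi h1i
  set t := lw.get ⟨i, hi⟩ with ht
  have htw : t ∈ lw := List.get_mem _ _
  have htl : t ∈ l := ((hmemw t).mp htw).1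
  have htp : t ∈ lp := ((hmemw t).mp htw).2
  obtain ⟨l₁, l₂, hdec⟩ := List.append_of_mem htl
  have hndl : (l₁ ++ t :: l₂).Nodup := hdec ▸ hnd
  have htl₁ : t ∉ l₁ := by
    rcases List.nodup_append.mp hndl with ⟨-, -, hdisj⟩
    intro hmem1
    exact hdisj _ hmem1 _ List.mem_cons_self rfl
  have hpt : (fun x => decide (x ∈ lp)) t = true := by simp [htp]
  set A := l₁.filter (fun x => decide (x ∈ lp)) with hA
  have hfil : lw = A ++ t :: l₂.filter (fun x => decide (x ∈ lp)) := by
    rw [hlw, hdec, List.filter_append]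
    congr 1
    rw [List.filter_cons]
    simp [htp]
  have hAlen : A.length < lw.length := by
    rw [hfil]
    simp only [List.length_append, List.length_cons]
    omega
  have h2 : lw[A.length]? = some t := by
    rw [hfil, List.getElem?_append_right (le_refl _)]
    simp
  have hAi : i = A.length := by
    have h3 : lw[i]? = some t := by
      rw [List.getElem?_eq_getElem hi]
      simp [ht]
    have h4 : lw.get ⟨i, hi⟩ = lw.get ⟨A.length, hAlen⟩ := by
      have h5 := List.getElem?_eq_getElem hAlen
      rw [h2] at h5
      simp only [List.get_eq_getElem]
      rw [← Option.some_inj]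
      rw [← h5, ← h3, List.getElem?_eq_getElem hi]
    have h6 := (List.Nodup.get_inj_iff hndw).mp h4
    exact congrArg Fin.val h6
  have htake_w : lw.take i = A := by
    rw [hAi, hfil, List.take_left]
  set j := l₁.length with hj
  have hjlen : j < l.length := by rw [hdec]; simp [hj]
  have hgetj : l.get ⟨j, hjlen⟩ = t := by
    have h2' : l[j]? = some t := by
      rw [hdec, List.getElem?_append_right (le_refl _)]
      simp
    have := List.getElem?_eq_getElem hjlen
    rw [h2'] at this
    simp only [List.get_eq_getElem]
    exact (Option.some_inj.mp this).symm
  have htake_l : l.take j = l₁ := by rw [hdec, List.take_left]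
  have hAne : A ≠ [] := by
    intro h
    rw [h] at hAi
    simp at hAi
    omega
  have hl₁ne : l₁ ≠ [] := by
    intro h
    rw [h] at hA
    simp at hA
    exact hAne hA
  have h1j : 1 ≤ j := by
    rw [hj]
    cases l₁ with
    | nil => exact absurd rfl hl₁ne
    | cons _ _ => simp
  obtain ⟨-, -, hfree⟩ := hord j hjlen h1j
  rw [htake_l, hgetj] at hfree
  have hsubA : {x : Pt | x ∈ A} ⊆ {x : Pt | x ∈ l₁} :=
    fun x hx => List.mem_of_mem_filter hx
  constructor
  · -- t ∉ prefix
    rw [htake_w]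
    intro hmem1
    exact htl₁ (List.mem_of_mem_filter hmem1)
  refine ⟨?_, ?_⟩
  swap
  · -- FreeDir
    rw [ht] at hfree ⊢
    rw [htake_w]
    exact freeDir_mono hsubA hfree
  -- adjacency via tree path argument
  have hc0 : 0 < A.length := by omega
  set c := A.get ⟨0, hc0⟩ with hc
  have hcA : c ∈ A := List.get_mem _ _
  have hcl₁ : c ∈ l₁ := List.mem_of_mem_filter hcA
  have hcp : c ∈ lp := by
    have := List.mem_filter.mp hcA
    simpa using this.2
  have htc : t ≠ c := fun h => htl₁ (h ▸ hcl₁)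
  have htake1 : l.take (j+1) = l₁ ++ [t] := by
    rw [List.take_succ, ← htake_l]
    congr 1
    rw [List.getElem?_eq_getElem hjlen]
    have hjt : l[j] = t := by simpa using hgetj
    simp [hjt]
  set R := {x : Pt | x ∈ l.take (j+1)} with hR
  have hconnR : ConnectedIn R := prefix_connected l hord (j+1) (by omega) (by omega)
  have htR : t ∈ R := by rw [hR, htake1]; simp
  have hcR : c ∈ R := by rw [hR, htake1]; simp [hcl₁]
  have hRP : R ⊆ (↑P : Set Pt) := by
    intro x hx
    exact hlP x (List.mem_of_mem_take hx)
  obtain ⟨L₁, hL1nd, hL1ch, hL1mem, hL1h, hL1l⟩ := exists_nodup_chain hRP hconnR htR hcR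
  obtain ⟨M, hMmem, hMch, hMnd, hMh, hMl⟩ := exists_sub_chain lp hpch hpnd htp hcp
  have htP : t ∈ (↑P : Set Pt) := hlP t htl
  have hcP : c ∈ (↑P : Set Pt) := hRP hcR
  obtain ⟨w₁, hw₁⟩ := exists_walk_of_list (P := P) L₁ hL1ch
    (fun x hx => hRP (hL1mem x hx)) t c hL1h hL1l htP hcP
  obtain ⟨w₂, hw₂⟩ := exists_walk_of_list (P := P) M hMch
    (fun x hx => hlP x (hpl x (hMmem x hx))) t c hMh hMl htP hcP
  have hp₁ : w₁.IsPath := by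
    rw [SimpleGraph.Walk.isPath_def]
    exact List.Nodup.of_map Subtype.val (hw₁ ▸ hL1nd)
  have hp₂ : w₂.IsPath := by
    rw [SimpleGraph.Walk.isPath_def]
    exact List.Nodup.of_map Subtype.val (hw₂ ▸ hMnd)
  have hEq : w₁ = w₂ := by
    have := (SimpleGraph.isAcyclic_iff_path_unique.mp htree.2)
      (⟨w₁, hp₁⟩ : (gridGraph (↑P : Set Pt)).Path _ _) ⟨w₂, hp₂⟩
    exact congrArg Subtype.val this
  have hLM : L₁ = M := by rw [← hw₁, ← hw₂, hEq]
  -- M starts with t and has a second element in A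
  cases M with
  | nil => simp at hMh
  | cons x M' =>
      simp only [List.head?_cons, Option.some.injEq] at hMh
      subst hMh
      cases M' with
      | nil =>
          simp only [List.getLast?_singleton, Option.some.injEq] at hMl
          exact absurd hMl htc
      | cons y M'' =>
          have hadjty : GridAdj t y := (List.isChain_cons_cons.mp hMch).1
          have hyR : y ∈ R := by
            have hyL : y ∈ L₁ := by rw [hLM]; simp
            exact hL1mem y hyL
          have hyt : y ≠ t := by
            intro h
            exact (List.nodup_cons.mp hMnd).1 (by simp [h])
          have hyl₁ : y ∈ l₁ := by
            rw [hR, htake1] at hyR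
            simp only [Set.mem_setOf_eq, List.mem_append, List.mem_singleton] at hyR
            rcases hyR with h | h
            · exact h
            · exact absurd h hyt
          have hyp : y ∈ lp := hMmem y (by simp)
          have hyA : y ∈ A := by
            rw [hA, List.mem_filter]
            exact ⟨hyl₁, by simpa using hyp⟩
          exact ⟨y, by rw [htake_w]; exact hyA, hadjty⟩

end TapAux

/-- In a tree-shaped polyomino with `N` tiles, for every constructible
subpolyomino `P⋆` there is a constructible path `W ⊆ P` with `|W|·√N ≥ |P⋆|`. -/
theorem tap_path_sqrt_approximation
    (P : Finset Pt) (hP : IsPolyomino P) (htree : TreeShaped P)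
    (N : ℕ) (hN : P.card = N)
    (Pstar : Finset Pt) (hsub : Pstar ⊆ P) (hstar : IsPolyomino Pstar)
    (hconstr : Constructible Pstar) :
    ∃ W : Finset Pt, W ⊆ P ∧ IsPathPoly W ∧ Constructible W ∧
      (Pstar.card : ℝ) ≤ (W.card : ℝ) * Real.sqrt N := by

  classical
  obtain ⟨hnem, hconnstar⟩ := hstar
  obtain ⟨l, hlnd, hlto, hlord⟩ := hconstr
  have hmeml : ∀ x : Pt, x ∈ l ↔ x ∈ Pstar := by
    intro x; rw [← hlto, List.mem_toFinset]
  have hlP : ∀ x ∈ l, x ∈ (↑P : Set Pt) := fun x hx => hsub ((hmeml x).mp hx)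
  have hQP : (↑Pstar : Set Pt) ⊆ (↑P : Set Pt) := fun x hx => hsub hx
  obtain ⟨ax, haxs, haxmin⟩ := Finset.exists_min_image Pstar Prod.fst hnem
  obtain ⟨bx, hbxs, hbxmax⟩ := Finset.exists_max_image Pstar Prod.fst hnem
  obtain ⟨ay, hays, haymin⟩ := Finset.exists_min_image Pstar Prod.snd hnem
  obtain ⟨by₀, hbys, hbymax⟩ := Finset.exists_max_image Pstar Prod.snd hnem
  set w : ℤ := bx.1 - ax.1 + 1 with hw
  set h : ℤ := by₀.2 - ay.2 + 1 with hh
  have hwax : ax.1 ≤ bx.1 := haxmin bx hbxs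
  have hhay : ay.2 ≤ by₀.2 := haymin by₀ hbys
  have hbox : (Pstar.card : ℤ) ≤ w * h := by
    have hsubbox : Pstar ⊆ Finset.Icc (ax.1, ay.2) (bx.1, by₀.2) := by
      intro p hp
      rw [Finset.mem_Icc]
      constructor
      · exact Prod.mk_le_mk.mpr ⟨haxmin p hp, haymin p hp⟩
      · exact Prod.mk_le_mk.mpr ⟨hbxmax p hp, hbymax p hp⟩
    have hcard := Finset.card_le_card hsubbox
    have hcic : (Finset.Icc (ax.1, ay.2) (bx.1, by₀.2)).card = w.toNat * h.toNat := by
      rw [Finset.Icc_prod_def, Finset.card_product]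
      simp only [Int.card_Icc]
      have e1 : bx.1 + 1 - ax.1 = w := by omega
      have e2 : by₀.2 + 1 - ay.2 = h := by omega
      rw [e1, e2]
    rw [hcic] at hcard
    calc (Pstar.card : ℤ) ≤ ((w.toNat * h.toNat : ℕ) : ℤ) := by exact_mod_cast hcard
      _ = w * h := by
          push_cast
          rw [Int.toNat_of_nonneg (by omega), Int.toNat_of_nonneg (by omega)]
  obtain ⟨L, hLnd, hLch, hLmem, hKbound⟩ :
      ∃ L : List Pt, L.Nodup ∧ L.Chain' GridAdj ∧ (∀ x ∈ L, x ∈ (↑Pstar : Set Pt)) ∧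
        (Pstar.card : ℤ) ≤ (L.length : ℤ) * (L.length : ℤ) := by
    rcases le_total h w with hcase | hcase
    · obtain ⟨L, h1, h2, h3, h4, h5⟩ := exists_nodup_chain (P := P) hQP hconnstar
        (Finset.mem_coe.mpr haxs) (Finset.mem_coe.mpr hbxs)
      have hb := (chain'_coord_bound L h2 ax bx h4 h5).1
      have habs : |bx.1 - ax.1| = bx.1 - ax.1 := abs_of_nonneg (by omega)
      have hwk : w ≤ (L.length : ℤ) := by omega
      refine ⟨L, h1, h2, h3, ?_⟩
      have h0w : (0:ℤ) ≤ h := by omega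
      nlinarith [hbox]
    · obtain ⟨L, h1, h2, h3, h4, h5⟩ := exists_nodup_chain (P := P) hQP hconnstar
        (Finset.mem_coe.mpr hays) (Finset.mem_coe.mpr hbys)
      have hb := (chain'_coord_bound L h2 ay by₀ h4 h5).2
      have habs : |by₀.2 - ay.2| = by₀.2 - ay.2 := abs_of_nonneg (by omega)
      have hhk : h ≤ (L.length : ℤ) := by omega
      refine ⟨L, h1, h2, h3, ?_⟩
      have h0w : (0:ℤ) ≤ w := by omega
      nlinarith [hbox]
  set W := L.toFinset with hW
  have hWsubstar : ∀ x ∈ L, x ∈ Pstar := fun x hx => hLmem x hx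
  have hWsub : W ⊆ P := by
    intro x hx
    exact hsub (hWsubstar x (List.mem_toFinset.mp hx))
  have hpl : ∀ x ∈ L, x ∈ l := fun x hx => (hmeml x).mpr (hWsubstar x hx)
  have hpath : IsPathPoly W :=
    ⟨L, rfl, hLnd, hLch, no_chords_of_tree htree L hLnd hLch (fun x hx => hQP (hLmem x hx))⟩
  obtain ⟨lw, hw1, hw2, hw3⟩ := chain_constructible htree l hlnd hlord hlP L hLnd hLch hpl
  have hconW : Constructible W := ⟨lw, hw1, by rw [hw2], hw3⟩
  refine ⟨W, hWsub, hpath, hconW, ?_⟩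
  have hcardW : W.card = L.length := List.toFinset_card_of_nodup hLnd
  have hmN : Pstar.card ≤ N := hN ▸ Finset.card_le_card hsub
  have hk2 : (Pstar.card : ℝ) ≤ (W.card : ℝ) * (W.card : ℝ) := by
    rw [hcardW]
    exact_mod_cast hKbound
  have hsm : Real.sqrt (Pstar.card : ℝ) ≤ (W.card : ℝ) := by
    have h1 : Real.sqrt (Pstar.card : ℝ) ≤ Real.sqrt ((W.card : ℝ) * (W.card : ℝ)) :=
      Real.sqrt_le_sqrt hk2
    rwa [Real.sqrt_mul_self (by positivity)] at h1
  calc (Pstar.card : ℝ) = Real.sqrt (Pstar.card : ℝ) * Real.sqrt (Pstar.card : ℝ) :=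
        (Real.mul_self_sqrt (by positivity)).symm
    _ ≤ (W.card : ℝ) * Real.sqrt (N : ℝ) := by
        apply mul_le_mul hsm (Real.sqrt_le_sqrt (by exact_mod_cast hmN))
          (Real.sqrt_nonneg _) (by positivity)
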